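/- Let F_{n,i} be the recursively defined α-Bernstein polynomials with α ∈ [0,1], n ≥ 2, and let ν_0 ≤ ν_1 ≤ ⋯ ≤ ν_n be real numbers. Then the function z ↦ ∑_{i=0}^{n} ν_i F_{n,i}(z) is monotone increasing on [0,1]. -/
import Mathlib


/-- The recursively defined α-Bernstein polynomials: starting basis at order 2,
extended by the de Casteljau-type recursion, zero outside `0 ≤ i ≤ n`. -/
noncomputable def F (α : ℝ) : ℕ → ℤ → ℝ → ℝ
  | 2, i, z =>
      if i = 0 then 1 - z + α * (z ^ 2 - z)
      else if i = 1 then -2 * α * (z ^ 2 - z)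
      else if i = 2 then z + α * (z ^ 2 - z) else 0
  | n + 3, i, z => (1 - z) * F α (n + 2) i z + z * F α (n + 2) (i - 1) z
  | _, _, _ => 0

/-- Partial (prefix) sums of the basis. -/
noncomputable def P (α : ℝ) (n k : ℕ) (z : ℝ) : ℝ :=
  ∑ j ∈ Finset.range k, F α n (j : ℤ) z

lemma F_succ (α : ℝ) {n : ℕ} (hn : 2 ≤ n) (i : ℤ) (z : ℝ) :
    F α (n + 1) i z = (1 - z) * F α n i z + z * F α n (i - 1) z := by
  obtain ⟨m, rfl⟩ := Nat.exists_eq_add_of_le' hn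
  rfl

lemma F_zero (α : ℝ) {n : ℕ} (hn : 2 ≤ n) {i : ℤ} (h : i < 0 ∨ (n : ℤ) < i) (z : ℝ) :
    F α n i z = 0 := by
  induction n, hn using Nat.le_induction generalizing i with
  | base =>
      have h0 : i ≠ 0 := by rcases h with h | h <;> omega
      have h1 : i ≠ 1 := by rcases h with h | h <;> omega
      have h2 : i ≠ 2 := by rcases h with h | h <;> omega
      simp [F, h0, h1, h2]
  | succ n hn ih =>
      rw [F_succ α hn]
      have h1 : i < 0 ∨ (n : ℤ) < i := by rcases h with h | h <;> [left; right] <;> omega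
      have h2 : i - 1 < 0 ∨ (n : ℤ) < i - 1 := by rcases h with h | h <;> [left; right] <;> omega
      rw [ih h1, ih h2]
      ring

lemma F_nonneg {α : ℝ} (hα : α ∈ Set.Icc (0 : ℝ) 1) {n : ℕ} (hn : 2 ≤ n) (i : ℤ)
    {z : ℝ} (hz : z ∈ Set.Icc (0 : ℝ) 1) : 0 ≤ F α n i z := by
  obtain ⟨ha0, ha1⟩ := hα
  obtain ⟨hz0, hz1⟩ := hz
  induction n, hn using Nat.le_induction generalizing i with
  | base =>
      have haz : α * z ≤ z := by nlinarith
      have haz' : α * (1 - z) ≤ 1 - z := by nlinarith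
      show (0:ℝ) ≤ F α 2 i z
      simp only [F]
      split_ifs
      · nlinarith [mul_nonneg (sub_nonneg.2 hz1) (by linarith : (0:ℝ) ≤ 1 - α * z)]
      · nlinarith [mul_nonneg (mul_nonneg ha0 hz0) (sub_nonneg.2 hz1)]
      · nlinarith [mul_nonneg hz0 (by linarith : (0:ℝ) ≤ 1 - α * (1 - z))]
      · exact le_refl 0
  | succ n hn ih =>
      rw [F_succ α hn]
      have := ih i
      have := ih (i - 1)
      nlinarith

lemma P_sum_one {α : ℝ} {n : ℕ} (hn : 2 ≤ n) (z : ℝ) : P α n (n + 1) z = 1 := by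
  induction n, hn using Nat.le_induction with
  | base =>
      simp [P, Finset.sum_range_succ, F]
      ring
  | succ n hn ih =>
      have hz1 : F α n ((n : ℤ) + 1) z = 0 := F_zero α hn (by right; omega) z
      have hzneg : F α n (-1) z = 0 := F_zero α hn (by left; omega) z
      simp only [P, F_succ α hn]
      rw [Finset.sum_add_distrib, ← Finset.mul_sum, ← Finset.mul_sum]
      have e1 : ∑ j ∈ Finset.range (n + 1 + 1), F α n (j : ℤ) z = 1 := by
        rw [Finset.sum_range_succ]
        push_cast
        rw [hz1, add_zero]
        exact ih
      have e2 : ∑ j ∈ Finset.range (n + 1 + 1), F α n ((j : ℤ) - 1) z = 1 := by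
        rw [Finset.sum_range_succ']
        push_cast
        simp only [add_sub_cancel_right]
        rw [hzneg, add_zero]
        simpa [P] using ih
      rw [e1, e2]; ring

lemma P_succ (α : ℝ) {n : ℕ} (hn : 2 ≤ n) (k : ℕ) (z : ℝ) :
    P α (n + 1) (k + 1) z = (1 - z) * P α n (k + 1) z + z * P α n k z := by
  simp only [P, F_succ α hn, Finset.sum_add_distrib, ← Finset.mul_sum]
  congr 2
  rw [Finset.sum_range_succ']
  have h0 : F α n (-1 : ℤ) z = 0 := F_zero α hn (by left; omega) z
  push_cast
  simp only [add_sub_cancel_right]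
  rw [h0, add_zero]

lemma P_le {α : ℝ} (hα : α ∈ Set.Icc (0 : ℝ) 1) {n : ℕ} (hn : 2 ≤ n) (k : ℕ)
    {z : ℝ} (hz : z ∈ Set.Icc (0 : ℝ) 1) : P α n k z ≤ P α n (k + 1) z := by
  have := F_nonneg hα hn (k : ℤ) hz
  simp only [P, Finset.sum_range_succ]
  linarith

lemma P_high {α : ℝ} {n : ℕ} (hn : 2 ≤ n) {k : ℕ} (hk : n + 1 ≤ k) (z : ℝ) :
    P α n k z = 1 := by
  induction k, hk using Nat.le_induction with
  | base => exact P_sum_one hn z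
  | succ k hk ih =>
      have h0 : F α n (k : ℤ) z = 0 := F_zero α hn (by right; exact_mod_cast by omega) z
      simp only [P, Finset.sum_range_succ] at ih ⊢
      rw [h0, add_zero]
      exact ih

lemma P_anti {α : ℝ} (hα : α ∈ Set.Icc (0 : ℝ) 1) {n : ℕ} (hn : 2 ≤ n) (k : ℕ) :
    AntitoneOn (fun z => P α n k z) (Set.Icc (0 : ℝ) 1) := by
  obtain ⟨ha0, ha1⟩ := hα
  induction n, hn using Nat.le_induction generalizing k with
  | base =>
      match k with
      | 0 => intro x _ y _ _; simp [P]
      | 1 =>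
          intro x hx y hy hxy
          obtain ⟨hx0, hx1⟩ := hx; obtain ⟨hy0, hy1⟩ := hy
          have hP : ∀ z : ℝ, P α 2 1 z = 1 - z + α * (z ^ 2 - z) := by
            intro z; norm_num [P, Finset.sum_range_succ, F]
          simp only [hP]
          have h1 : α * (x + y - 1) ≤ 1 := by
            nlinarith [mul_nonneg ha0 (show (0:ℝ) ≤ 2 - x - y by linarith)]
          nlinarith [mul_nonneg (sub_nonneg.2 hxy)
            (show (0:ℝ) ≤ 1 - α * (x + y - 1) by linarith)]
      | 2 =>
          intro x hx y hy hxy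
          obtain ⟨hx0, hx1⟩ := hx; obtain ⟨hy0, hy1⟩ := hy
          have hP : ∀ z : ℝ, P α 2 2 z = 1 - z - α * (z ^ 2 - z) := by
            intro z; norm_num [P, Finset.sum_range_succ, F]; ring
          simp only [hP]
          have h1 : -1 ≤ α * (x + y - 1) := by
            nlinarith [mul_nonneg ha0 (show (0:ℝ) ≤ x + y by linarith)]
          nlinarith [mul_nonneg (sub_nonneg.2 hxy)
            (show (0:ℝ) ≤ 1 + α * (x + y - 1) by linarith)]
      | (k + 3) =>
          intro x hx y hy hxy
          simp only [P_high (le_refl 2) (by omega : 2 + 1 ≤ k + 3)]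
          exact le_refl 1
  | succ n hn ih =>
      match k with
      | 0 => intro x _ y _ _; simp [P]
      | (m + 1) =>
          intro x hx y hy hxy
          simp only [P_succ α hn m]
          have hA := ih (m + 1) hx hy hxy
          have hB := ih m hx hy hxy
          have hD := P_le ⟨ha0, ha1⟩ hn m hx
          obtain ⟨hx0, hx1⟩ := hx; obtain ⟨hy0, hy1⟩ := hy
          simp only at hA hB
          nlinarith [mul_nonneg (show (0:ℝ) ≤ 1 - y by linarith) (sub_nonneg.2 hA),
            mul_nonneg hy0 (sub_nonneg.2 hB),
            mul_nonneg (sub_nonneg.2 hxy) (sub_nonneg.2 hD)]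

theorem alphaBernstein_monotonicity_preserving (α : ℝ) (hα : α ∈ Set.Icc (0 : ℝ) 1)
    (n : ℕ) (hn : 2 ≤ n) (ν : ℕ → ℝ) (hν : ∀ i, i < n → ν i ≤ ν (i + 1)) :
    MonotoneOn (fun z : ℝ => ∑ i ∈ Finset.range (n + 1), ν i * F α n (i : ℤ) z)
      (Set.Icc 0 1) := by
  have key : ∀ z : ℝ, (∑ i ∈ Finset.range (n + 1), ν i * F α n (i : ℤ) z) =
      ν n - ∑ i ∈ Finset.range n, (ν (i + 1) - ν i) * P α n (i + 1) z := by
    intro z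
    have h := Finset.sum_range_by_parts ν (fun j => F α n (j : ℤ) z) (n + 1)
    simp only [smul_eq_mul, Nat.add_sub_cancel] at h
    rw [h]
    have h1 : (∑ i ∈ Finset.range (n + 1), F α n (i : ℤ) z) = 1 := P_sum_one hn z
    rw [h1, mul_one]
    rfl
  intro x hx y hy hxy
  simp only [key]
  have hs : (∑ i ∈ Finset.range n, (ν (i + 1) - ν i) * P α n (i + 1) y) ≤
      ∑ i ∈ Finset.range n, (ν (i + 1) - ν i) * P α n (i + 1) x := by
    apply Finset.sum_le_sum
    intro i hi
    have hd : 0 ≤ ν (i + 1) - ν i := sub_nonneg.2 (hν i (Finset.mem_range.1 hi))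
    exact mul_le_mul_of_nonneg_left (P_anti hα hn (i + 1) hx hy hxy) hd
  linarith
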